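/- arXiv:0801.2690 — 2 statements merged into one kernel-verified Lean document; each statement's English description precedes it below -/
import Mathlib

section
/- Let G be a finite abelian p-group generated by d elements acting on a finite abelian p-group M. Suppose there is a subgroup H₀ ⊆ G such that G/H₀ is cyclic and M is fixed pointwise by H₀. Then the order of the first group cohomology H¹(G, M) is at most |M^G|^d. -/
open groupCohomology

/-- In a finite cyclic `p`-group, any generating set contains a single generator. -/
lemma aux_exists_single_gen {p : ℕ} (hp : p.Prime) {C : Type} [CommGroup C] [Finite C]
    (hC : IsCyclic C) (hpC : IsPGroup p C) (t : Set C) (ht : Subgroup.closure t = ⊤)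
    (hne : t.Nonempty) : ∃ y ∈ t, Subgroup.zpowers y = ⊤ := by
  haveI : Fact p.Prime := ⟨hp⟩
  obtain ⟨e, he⟩ := IsPGroup.iff_card.mp hpC
  rcases Nat.eq_zero_or_pos e with rfl | he1
  · obtain ⟨y, hy⟩ := hne
    have hsub : Subsingleton C := by
      rw [pow_zero] at he
      exact (Nat.card_eq_one_iff_unique.mp he).1
    exact ⟨y, hy, (Subgroup.eq_top_iff' _).mpr fun x =>
      (Subsingleton.elim x y) ▸ Subgroup.mem_zpowers y⟩
  · by_contra hcon
    push_neg at hcon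
    have hker : ∀ y ∈ t, y ∈ (powMonoidHom (p ^ (e - 1)) : C →* C).ker := by
      intro y hy
      have h1 : orderOf y ∣ p ^ e := he ▸ orderOf_dvd_natCard y
      obtain ⟨a, ha, hay⟩ := (Nat.dvd_prime_pow hp).mp h1
      have hae : a ≠ e := by
        rintro rfl
        exact hcon y hy (Subgroup.eq_top_of_card_eq _
          (by rw [Nat.card_zpowers, hay, he]))
      have hdvd : orderOf y ∣ p ^ (e - 1) := hay ▸ pow_dvd_pow p (by omega)
      simpa [MonoidHom.mem_ker, powMonoidHom_apply] using
        orderOf_dvd_iff_pow_eq_one.mp hdvd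
    have htop : (⊤ : Subgroup C) ≤ (powMonoidHom (p ^ (e - 1)) : C →* C).ker := by
      rw [← ht]; exact (Subgroup.closure_le _).mpr hker
    obtain ⟨c, hc⟩ := hC.exists_generator
    have hctop : Subgroup.zpowers c = ⊤ := (Subgroup.eq_top_iff' _).mpr hc
    have hcord : orderOf c = p ^ e := by
      rw [← he, ← Nat.card_zpowers, hctop, Subgroup.card_top]
    have hc1 : c ^ (p ^ (e - 1)) = 1 := by
      have := htop (Subgroup.mem_top c)
      simpa [MonoidHom.mem_ker, powMonoidHom_apply] using this
    have hdvd : p ^ e ∣ p ^ (e - 1) := hcord ▸ orderOf_dvd_of_pow_eq_one hc1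
    have hle := Nat.le_of_dvd (pow_pos hp.pos _) hdvd
    have hlt := Nat.pow_lt_pow_right hp.one_lt (show e - 1 < e by omega)
    omega

/-- Two 1-cocycles agreeing on a set agree on its closure. -/
lemma aux_cocycle_eqOn {k G : Type} [CommRing k] [Group G] {A : Rep k G}
    (f f' : cocycles₁ A) (s : Set G)
    (h : ∀ x ∈ s, (f : G → A) x = (f' : G → A) x) :
    ∀ x ∈ Subgroup.closure s, (f : G → A) x = (f' : G → A) x := by
  intro x hx
  induction hx using Subgroup.closure_induction with
  | mem y hy => exact h y hy
  | one => rw [cocycles₁_map_one, cocycles₁_map_one]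
  | mul y z hy hz ihy ihz =>
      rw [(mem_cocycles₁_iff (f : G → A)).mp f.2 y z,
        (mem_cocycles₁_iff (f' : G → A)).mp f'.2 y z, ihy, ihz]
  | inv y hy ihy =>
      have h1 := cocycles₁_map_inv f y
      have h2 := cocycles₁_map_inv f' y
      rw [ihy] at h1
      have h3 : A.ρ y ((f : G → A) y⁻¹) = A.ρ y ((f' : G → A) y⁻¹) := h1.trans h2.symm
      have h4 := congrArg (A.ρ y⁻¹) h3
      simpa only [← Module.End.mul_apply, ← map_mul, inv_mul_cancel, map_one,
        Module.End.one_apply] using h4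

/-- Let `G` be a finite abelian `p`-group generated by `d` elements
acting on a finite abelian `p`-group `M`.  Suppose there is a subgroup `H₀ ⊆ G` such
that `G ⧸ H₀` is cyclic and `M` is fixed pointwise by `H₀`.  Then
`|H¹(G, M)| ≤ |M^G| ^ d`. -/
theorem stmt0 (p d : ℕ) (hp : p.Prime) (G : Type) [CommGroup G] [Finite G]
    (hpG : IsPGroup p G)
    (hgen : ∃ s : Finset G, s.card ≤ d ∧ Subgroup.closure (s : Set G) = ⊤)
    (M : Type) [AddCommGroup M] [Finite M]
    (hpM : ∀ m : M, ∃ n : ℕ, p ^ n • m = 0)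
    (ρ : Representation ℤ G M)
    (H₀ : Subgroup G) (hcyc : IsCyclic (G ⧸ H₀))
    (hfix : ∀ h ∈ H₀, ∀ m : M, ρ h m = m) :
    Nat.card (groupCohomology.H1 (Rep.of ρ)) ≤ Nat.card ρ.invariants ^ d := by
  classical
  obtain ⟨s, hsd, hstop⟩ := hgen
  set A : Rep ℤ G := Rep.of ρ with hA
  haveI : Finite (G → A) := inferInstanceAs (Finite (G → M))
  haveI : Finite (cocycles₁ A) := inferInstance
  have hIpos : 0 < Nat.card ρ.invariants := Nat.card_pos
  rcases s.eq_empty_or_nonempty with rfl | hne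
  · -- G is trivial
    have hGsub : Subsingleton G := by
      constructor
      intro a b
      have : ∀ x : G, x = 1 := by
        intro x
        have hx : x ∈ Subgroup.closure (∅ : Set G) := by
          rw [show ((∅ : Finset G) : Set G) = (∅ : Set G) from Finset.coe_empty] at hstop
          rw [hstop]; trivial
        rw [Subgroup.closure_empty] at hx
        exact Subgroup.mem_bot.mp hx
      rw [this a, this b]
    have hZ : ∀ f : cocycles₁ A, f = 0 := by
      intro f
      apply Subtype.ext
      funext x
      have hx1 : x = (1 : G) := Subsingleton.elim _ _
      rw [hx1]
      exact cocycles₁_map_one f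
    have hH1 : Subsingleton (groupCohomology.H1 A) := by
      constructor
      intro a b
      have hsurj : Function.Surjective (H1π A) :=
        (ModuleCat.epi_iff_surjective _).mp inferInstance
      obtain ⟨fa, rfl⟩ := hsurj a
      obtain ⟨fb, rfl⟩ := hsurj b
      rw [hZ fa, hZ fb]
    have : Nat.card (groupCohomology.H1 A) = 1 :=
      Nat.card_eq_one_iff_unique.mpr ⟨hH1, ⟨0⟩⟩
    rw [this]
    exact pow_pos hIpos d
  · have hd1 : 1 ≤ d := le_trans (Finset.card_pos.mpr hne) hsd
    have hquotgen : Subgroup.closure ((QuotientGroup.mk' H₀) '' (s : Set G)) = ⊤ := by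
      rw [← MonoidHom.map_closure, hstop,
        Subgroup.map_top_of_surjective _ (QuotientGroup.mk'_surjective H₀)]
    obtain ⟨g, hgs⟩ := hne
    obtain ⟨y, hy_mem, hy_top⟩ := aux_exists_single_gen hp hcyc (hpG.to_quotient H₀)
      _ hquotgen ⟨_, Set.mem_image_of_mem _ (Finset.mem_coe.mpr hgs)⟩
    obtain ⟨g₀, hg₀s', hg₀y⟩ := hy_mem
    have hg₀s : g₀ ∈ s := Finset.mem_coe.mp hg₀s'
    -- key invariance property
    have hkey : ∀ m : M, ρ g₀ m = m → ∀ x : G, ρ x m = m := by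
      intro m hm x
      have hpow : ∀ n : ℕ, ρ (g₀ ^ n) m = m := by
        intro n
        induction n with
        | zero => simp
        | succ n ih => rw [pow_succ, map_mul, Module.End.mul_apply, hm, ih]
      have hx' : (QuotientGroup.mk' H₀) x ∈ Subgroup.zpowers ((QuotientGroup.mk' H₀) g₀) := by
        rw [hg₀y, hy_top]; trivial
      obtain ⟨n, hn⟩ := mem_powers_iff_mem_zpowers.mpr hx'
      have hn' : ((g₀ ^ n : G) : G ⧸ H₀) = (x : G ⧸ H₀) := by
        rw [← QuotientGroup.mk'_apply, ← QuotientGroup.mk'_apply, map_pow]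
        exact hn
      have hmem : (g₀ ^ n)⁻¹ * x ∈ H₀ := QuotientGroup.eq.mp hn'
      have hxeq : x = g₀ ^ n * ((g₀ ^ n)⁻¹ * x) := by group
      rw [hxeq, map_mul, Module.End.mul_apply, hfix _ hmem m, hpow n]
    -- values of cocycles vanishing at g₀ are invariant
    have hfixval : ∀ f : cocycles₁ A, (f : G → A) g₀ = 0 →
        ∀ x : G, ((f : G → A) x) ∈ ρ.invariants := by
      intro f hf x
      have hco := (mem_cocycles₁_iff (f : G → A)).mp f.2
      have h1 : (f : G → A) (g₀ * x) = A.ρ g₀ ((f : G → A) x) + (f : G → A) g₀ := hco g₀ x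
      have h2 : (f : G → A) (x * g₀) = A.ρ x ((f : G → A) g₀) + (f : G → A) x := hco x g₀
      rw [hf, add_zero] at h1
      rw [hf, map_zero, zero_add] at h2
      have h3 : A.ρ g₀ ((f : G → A) x) = (f : G → A) x := by
        rw [← h1, mul_comm, h2]
      rw [Representation.mem_invariants]
      intro g
      exact hkey _ h3 g
    -- evaluation at g₀
    let E : cocycles₁ A →+ M :=
      { toFun := fun f => (f : G → A) g₀
        map_zero' := rfl
        map_add' := fun f f' => rfl }
    have hcardZ : Nat.card (cocycles₁ A) =
        Nat.card (cocycles₁ A ⧸ E.ker) * Nat.card E.ker :=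
      AddSubgroup.card_eq_card_quotient_mul_card_addSubgroup E.ker
    have hquotle : Nat.card (cocycles₁ A ⧸ E.ker) ≤ Nat.card M :=
      calc Nat.card (cocycles₁ A ⧸ E.ker) = Nat.card E.range :=
            Nat.card_congr (QuotientAddGroup.quotientKerEquivRange E).toEquiv
        _ ≤ Nat.card M := Nat.card_le_card_of_injective _ Subtype.coe_injective
    have hker : Nat.card E.ker ≤ Nat.card ρ.invariants ^ (d - 1) := by
      have hinj : Function.Injective (fun (f : E.ker) (x : ↥(s.erase g₀)) =>
          (⟨(f.1 : G → A) x.1, hfixval f.1 (AddMonoidHom.mem_ker.mp f.2) x.1⟩ :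
            ρ.invariants)) := by
        intro f f' hff
        have heval : ∀ x ∈ (s : Set G), (f.1 : G → A) x = (f'.1 : G → A) x := by
          intro x hxs
          by_cases hx0 : x = g₀
          · rw [hx0]
            exact (AddMonoidHom.mem_ker.mp f.2).trans (AddMonoidHom.mem_ker.mp f'.2).symm
          · have hxe : x ∈ s.erase g₀ := Finset.mem_erase.mpr ⟨hx0, Finset.mem_coe.mp hxs⟩
            exact Subtype.ext_iff.mp (congrFun hff ⟨x, hxe⟩)
        have hall : ∀ x : G, (f.1 : G → A) x = (f'.1 : G → A) x := fun x =>
          aux_cocycle_eqOn f.1 f'.1 (s : Set G) heval x (by rw [hstop]; trivial)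
        exact Subtype.ext (Subtype.ext (funext hall))
      calc Nat.card E.ker ≤ Nat.card (↥(s.erase g₀) → ↥ρ.invariants) :=
            Nat.card_le_card_of_injective _ hinj
        _ = Nat.card ρ.invariants ^ (s.erase g₀).card := by
            rw [Nat.card_fun, Nat.card_eq_finsetCard]
        _ ≤ Nat.card ρ.invariants ^ (d - 1) := Nat.pow_le_pow_right hIpos
            (by rw [Finset.card_erase_of_mem hg₀s]; omega)
    -- coboundaries
    have hBcard : Nat.card M = Nat.card ρ.invariants * Nat.card (coboundaries₁ A) := by
      have e1 : Nat.card (A ⧸ LinearMap.ker (d₀₁ A).hom) =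
          Nat.card (LinearMap.range (d₀₁ A).hom) :=
        Nat.card_congr (LinearMap.quotKerEquivRange (d₀₁ A).hom).toEquiv
      have e2 : Nat.card (LinearMap.range (d₀₁ A).hom) = Nat.card (coboundaries₁ A) :=
        Nat.card_congr (Equiv.refl _)
      have e3 : Nat.card (LinearMap.ker (d₀₁ A).hom) = Nat.card ρ.invariants := by
        rw [d₀₁_ker_eq_invariants, hA, Rep.of_ρ]
      have e0 := Submodule.card_eq_card_quotient_mul_card (LinearMap.ker (d₀₁ A).hom)
      rw [e1, e2, e3] at e0
      exact e0
    have hH1c : Nat.card (cocycles₁ A) =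
        Nat.card (coboundaries₁ A) * Nat.card (groupCohomology.H1 A) := by
      have hsurj : Function.Surjective (H1π A).hom :=
        (ModuleCat.epi_iff_surjective _).mp inferInstance
      have q1 : Nat.card (cocycles₁ A ⧸ LinearMap.ker (H1π A).hom) =
          Nat.card (groupCohomology.H1 A) :=
        Nat.card_congr (LinearMap.quotKerEquivOfSurjective _ hsurj).toEquiv
      have q2 : Nat.card (LinearMap.ker (H1π A).hom) = Nat.card (coboundaries₁ A) :=
        Nat.card_congr ⟨fun x => ⟨x.1.1, (H1π_eq_zero_iff x.1).mp (LinearMap.mem_ker.mp x.2)⟩,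
          fun b => ⟨⟨b.1, coboundaries₁_le_cocycles₁ A b.2⟩,
            LinearMap.mem_ker.mpr ((H1π_eq_zero_iff _).mpr b.2)⟩,
          fun x => rfl, fun b => rfl⟩
      have q0 := Submodule.card_eq_card_quotient_mul_card (LinearMap.ker (H1π A).hom)
      rw [q1, q2] at q0
      rw [q0, mul_comm]
    have hZle : Nat.card (cocycles₁ A) ≤ Nat.card M * Nat.card ρ.invariants ^ (d - 1) := by
      rw [hcardZ]
      exact Nat.mul_le_mul hquotle hker
    have hm : 0 < Nat.card M := Nat.card_pos
    have hdd : (d - 1) + 1 = d := by omega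
    have key : Nat.card M * Nat.card (groupCohomology.H1 A) ≤
        Nat.card M * Nat.card ρ.invariants ^ d := by
      calc Nat.card M * Nat.card (groupCohomology.H1 A)
          = Nat.card ρ.invariants * Nat.card (coboundaries₁ A) *
            Nat.card (groupCohomology.H1 A) := by rw [hBcard]
        _ = Nat.card ρ.invariants * Nat.card (cocycles₁ A) := by rw [mul_assoc, hH1c]
        _ ≤ Nat.card ρ.invariants * (Nat.card M * Nat.card ρ.invariants ^ (d - 1)) :=
            Nat.mul_le_mul_left _ hZle
        _ = Nat.card M * (Nat.card ρ.invariants * Nat.card ρ.invariants ^ (d - 1)) := by ring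
        _ = Nat.card M * Nat.card ρ.invariants ^ ((d - 1) + 1) := by rw [pow_succ']
        _ = Nat.card M * Nat.card ρ.invariants ^ d := by rw [hdd]
    exact Nat.le_of_mul_le_mul_left key hm
end

section
/- Let L/K be a ℤ_p-extension of fields with layers K_n, and let M be a discrete Gal(L/K)-module that is cofinitely generated over ℤ_p (i.e. M is a p-primary group with finite corank). Let M_∞ be the maximal p-divisible subgroup of M and T = M/M_∞ the finite quotient. Suppose n₀ is such that for n ≥ n₀, M^{Gal(L/K_n)} contains M[p²] ∩ M. Then for all m ≥ n ≥ n₀, the invariants M^{Gal(L/K_n)} ∩ M_∞ are contained in the image of the norm map N_{K_m/K_n} applied to M^{Gal(L/K_m)} ∩ M_∞; consequently |H²(Gal(K_m/K_n), M^{Gal(L/K_m)})| ≤ |T|. -/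
theorem sum_range_mul_reindex {M : Type*} [AddCommMonoid M] (p P : ℕ) (hp : 0 < p)
    (f : ℕ → M) :
    ∑ i ∈ Finset.range (p * P), f i
      = ∑ j ∈ Finset.range p, ∑ k ∈ Finset.range P, f (j + p * k) := by
  rw [← Finset.sum_product']
  refine Finset.sum_nbij' (fun i => (i % p, i / p)) (fun jk => jk.1 + p * jk.2) ?_ ?_ ?_ ?_ ?_
  · intro i hi
    simp only [Finset.mem_range] at hi
    simp only [Finset.mem_product, Finset.mem_range]
    exact ⟨Nat.mod_lt _ hp, Nat.div_lt_of_lt_mul (by linarith [hi])⟩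
  · intro jk hjk
    simp only [Finset.mem_product, Finset.mem_range] at hjk
    simp only [Finset.mem_range]
    calc jk.1 + p * jk.2 < p + p * jk.2 := by omega
    _ = p * (jk.2 + 1) := by ring
    _ ≤ p * P := Nat.mul_le_mul_left _ (by omega)
  · intro i _; exact Nat.mod_add_div i p
  · intro jk hjk
    simp only [Finset.mem_product, Finset.mem_range] at hjk
    ext
    · simp [Nat.add_mul_mod_self_left, Nat.mod_eq_of_lt hjk.1]
    · simp [Nat.add_mul_div_left _ _ hp, Nat.div_eq_of_lt hjk.1]
  · intro i _
    rw [Nat.mod_add_div]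



/-- The subgroup of invariants of a representation under a subgroup `H`. -/
def invSub {G M : Type} [Group G] [AddCommGroup M]
    (ρ : Representation ℤ G M) (H : Subgroup G) : AddSubgroup M where
  carrier := {m | ∀ g ∈ H, ρ g m = m}
  zero_mem' := by intro g _; simp
  add_mem' := by intro a b ha hb g hg; rw [map_add, ha g hg, hb g hg]
  neg_mem' := by intro a ha g hg; rw [map_neg, ha g hg]

/-- Let `L/K` be a `ℤ_p`-extension with layers `K_n`, and `M` a
discrete `Gal(L/K)`-module, cofinitely generated over `ℤ_p` (a `p`-primary group of
finite corank).  Let `M_∞` be the maximal `p`-divisible subgroup of `M` and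
`T = M/M_∞` the finite quotient.  Suppose `n₀` is such that for `n ≥ n₀` the invariants
`M^{Gal(L/K_n)}` contain `M[p²]`.  Then for all `m ≥ n ≥ n₀` the invariants
`M^{Gal(L/K_n)} ∩ M_∞` lie in the image of the norm `N_{K_m/K_n}` applied to
`M^{Gal(L/K_m)} ∩ M_∞`; consequently
`|H²(Gal(K_m/K_n), M^{Gal(L/K_m)})| ≤ |T|`.

Here `Gal(L/K) = Multiplicative ℤ_[p]` with topological generator `γ`,
`Gal(L/K_n) = p^n ℤ_p`, the norm is `x ↦ ∑_{i < p^{m-n}} γ^{i p^n} • x`, and since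
`Gal(K_m/K_n)` is cyclic, `H²(Gal(K_m/K_n), M^{Gal(L/K_m)}) = M^{Gal(L/K_n)}/N(M^{Gal(L/K_m)})`. -/
theorem stmt17 (p : ℕ) [hp : Fact p.Prime]
    (M : Type) [AddCommGroup M]
    (ρ : Representation ℤ (Multiplicative ℤ_[p]) M)
    (Γn : ℕ → Subgroup (Multiplicative ℤ_[p]))
    (hΓn : ∀ n, Γn n = AddSubgroup.toSubgroup
      ((Ideal.span {(p : ℤ_[p]) ^ n}).toAddSubgroup))
    (γ : Multiplicative ℤ_[p]) (hγ : γ = Multiplicative.ofAdd (1 : ℤ_[p]))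
    (hdisc : ∀ x : M, ∃ n : ℕ, ∀ g ∈ Γn n, ρ g x = x)
    (hpM : ∀ x : M, ∃ k : ℕ, p ^ k • x = 0)
    (hcorank : Finite {x : M // p • x = 0})
    (Minf : AddSubgroup M)
    (hdiv : ∀ x ∈ Minf, ∀ k : ℕ, ∃ y ∈ Minf, p ^ k • y = x)
    (hmax : ∀ D : AddSubgroup M, (∀ x ∈ D, ∀ k : ℕ, ∃ y ∈ D, p ^ k • y = x) → D ≤ Minf)
    [Finite (M ⧸ Minf)]
    (n₀ : ℕ) (hn₀ : ∀ n, n₀ ≤ n → ∀ x : M, p ^ 2 • x = 0 → x ∈ invSub ρ (Γn n)) :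
    ∀ m n : ℕ, n₀ ≤ n → n ≤ m →
      (invSub ρ (Γn n) ⊓ Minf ≤ AddSubgroup.map
          (∑ i ∈ Finset.range (p ^ (m - n)), (ρ (γ ^ (i * p ^ n))).toAddMonoidHom)
          (invSub ρ (Γn m) ⊓ Minf)) ∧
      Nat.card ((invSub ρ (Γn n)) ⧸
          ((AddSubgroup.map
            (∑ i ∈ Finset.range (p ^ (m - n)), (ρ (γ ^ (i * p ^ n))).toAddMonoidHom)
            (invSub ρ (Γn m))).addSubgroupOf (invSub ρ (Γn n))))
        ≤ Nat.card (M ⧸ Minf) := by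
  
  -- membership criterion for Γn
  have hmemΓ : ∀ (n : ℕ) (g : Multiplicative ℤ_[p]),
      g ∈ Γn n ↔ (p : ℤ_[p]) ^ n ∣ Multiplicative.toAdd g := by
    intro n g
    rw [hΓn]
    show Multiplicative.toAdd g ∈ Ideal.span {(p : ℤ_[p]) ^ n} ↔ _
    exact Ideal.mem_span_singleton
  -- γ natural powers
  have htoAdd : ∀ e : ℕ, Multiplicative.toAdd (γ ^ e) = (e : ℤ_[p]) := by
    intro e; rw [hγ]; simp
  have hmemγ : ∀ (n e : ℕ), p ^ n ∣ e → γ ^ e ∈ Γn n := by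
    intro n e he
    rw [hmemΓ, htoAdd]
    have : ((p ^ n : ℕ) : ℤ_[p]) ∣ ((e : ℕ) : ℤ_[p]) := Nat.cast_dvd_cast he
    simpa using this
  -- apply sums of homs
  have hsum : ∀ (s : Finset ℕ) (f : ℕ → Multiplicative ℤ_[p]) (x : M),
      (∑ i ∈ s, (ρ (f i)).toAddMonoidHom) x = ∑ i ∈ s, ρ (f i) x := by
    intro s f x; simp [AddMonoidHom.finset_sum_apply]
  -- monotonicity
  have hΓmono : ∀ {n m : ℕ}, n ≤ m → Γn m ≤ Γn n := by
    intro n m hnm g hg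
    rw [hmemΓ] at hg ⊢
    exact dvd_trans (pow_dvd_pow _ hnm) hg
  have hinvmono : ∀ {n m : ℕ}, n ≤ m → invSub ρ (Γn n) ≤ invSub ρ (Γn m) := by
    intro n m hnm x hx g hg
    exact hx g (hΓmono hnm hg)
  -- stability of Minf under the action
  have hstab : ∀ (g : Multiplicative ℤ_[p]), ∀ x ∈ Minf, ρ g x ∈ Minf := by
    intro g x hx
    have hD : ∀ y ∈ AddSubgroup.map (ρ g).toAddMonoidHom Minf, ∀ k : ℕ,
        ∃ z ∈ AddSubgroup.map (ρ g).toAddMonoidHom Minf, p ^ k • z = y := by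
      rintro y ⟨w, hw, rfl⟩ k
      obtain ⟨z, hz, hzk⟩ := hdiv w hw k
      refine ⟨ρ g z, ⟨z, hz, rfl⟩, ?_⟩
      show p ^ k • ρ g z = ρ g w
      rw [← hzk, map_nsmul]
    exact hmax _ hD (AddSubgroup.mem_map.2 ⟨x, hx, rfl⟩)
  -- p-torsion helper
  have hp2 : ∀ x : M, p • x = 0 → p ^ 2 • x = 0 := by
    intro x hx
    rw [sq, mul_smul, hx, smul_zero]
  -- key lifting step
  have hlift : ∀ n, n₀ ≤ n → ∀ Q, Q ∈ invSub ρ (Γn n) → Q ∈ Minf →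
      ∃ Q', Q' ∈ invSub ρ (Γn (n + 1)) ∧ Q' ∈ Minf ∧ p • Q' = Q := by
    intro n hn Q hQinv hQMinf
    obtain ⟨Q', hQ'Minf, hpQ'⟩ := hdiv Q hQMinf 1
    rw [pow_one] at hpQ'
    have hhj : ∀ j : ℕ, γ ^ (j * p ^ n) ∈ Γn n := fun j => hmemγ n _ ⟨j, by ring⟩
    -- step A
    have hA : ∀ j : ℕ, p • (ρ (γ ^ (j * p ^ n)) Q' - Q') = 0 := by
      intro j
      have : p • ρ (γ ^ (j * p ^ n)) Q' = ρ (γ ^ (j * p ^ n)) (p • Q') :=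
        (map_nsmul (ρ (γ ^ (j * p ^ n))) p Q').symm
      rw [smul_sub, this, hpQ', hQinv _ (hhj j), sub_self]
    -- w and its properties
    set w : M := ∑ j ∈ Finset.range p, (ρ (γ ^ (j * p ^ n)) Q' - Q') with hw
    have hwp : p • w = 0 := by
      rw [hw, Finset.smul_sum]
      exact Finset.sum_eq_zero fun j _ => hA j
    have hwinv : ∀ k, n₀ ≤ k → w ∈ invSub ρ (Γn k) := fun k hk => hn₀ k hk w (hp2 w hwp)
    -- S = w + p • Q'
    have hS : ∑ j ∈ Finset.range p, ρ (γ ^ (j * p ^ n)) Q' = w + p • Q' := by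
      rw [hw, Finset.sum_sub_distrib, Finset.sum_const, Finset.card_range]
      abel
    -- telescoping
    have htel : ∑ j ∈ Finset.range p, ρ (γ ^ ((j + 1) * p ^ n)) Q'
        = ∑ j ∈ Finset.range p, ρ (γ ^ (j * p ^ n)) Q'
          - ρ (γ ^ (0 * p ^ n)) Q' + ρ (γ ^ (p * p ^ n)) Q' := by
      have h1 : ∑ j ∈ Finset.range (p + 1), ρ (γ ^ (j * p ^ n)) Q'
          = ∑ j ∈ Finset.range p, ρ (γ ^ ((j + 1) * p ^ n)) Q' + ρ (γ ^ (0 * p ^ n)) Q' :=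
        Finset.sum_range_succ' _ p
      have h2 : ∑ j ∈ Finset.range (p + 1), ρ (γ ^ (j * p ^ n)) Q'
          = ∑ j ∈ Finset.range p, ρ (γ ^ (j * p ^ n)) Q' + ρ (γ ^ (p * p ^ n)) Q' :=
        Finset.sum_range_succ _ p
      rw [h1] at h2
      linear_combination (norm := abel) h2
    -- applying ρ (γ ^ p^n) to S
    have happ : ρ (γ ^ (p ^ n)) (∑ j ∈ Finset.range p, ρ (γ ^ (j * p ^ n)) Q')
        = ∑ j ∈ Finset.range p, ρ (γ ^ ((j + 1) * p ^ n)) Q' := by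
      rw [map_sum]
      refine Finset.sum_congr rfl fun j _ => ?_
      have hjj : γ ^ ((j + 1) * p ^ n) = γ ^ (p ^ n) * γ ^ (j * p ^ n) := by
        rw [← pow_add]; congr 1; ring
      rw [hjj, map_mul, Module.End.mul_apply]
    -- ρ (γ^p^n) fixes S since it fixes w and Q
    have hfixS : ρ (γ ^ (p ^ n)) (∑ j ∈ Finset.range p, ρ (γ ^ (j * p ^ n)) Q')
        = ∑ j ∈ Finset.range p, ρ (γ ^ (j * p ^ n)) Q' := by
      rw [hS, map_add]
      have hg : γ ^ (p ^ n) ∈ Γn n := hmemγ n _ dvd_rfl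
      have h1 : ρ (γ ^ (p ^ n)) w = w := hwinv n hn _ hg
      have h2 : ρ (γ ^ (p ^ n)) (p • Q') = p • Q' := by
        rw [hpQ']; exact hQinv _ hg
      rw [h1, h2]
    -- conclude τ fixes Q'
    have hfixτ : ρ (γ ^ (p ^ (n + 1))) Q' = Q' := by
      have := hfixS
      rw [happ, htel] at this
      have h0 : ρ (γ ^ (0 * p ^ n)) Q' = Q' := by
        norm_num
      have heq : ρ (γ ^ (p * p ^ n)) Q' = ρ (γ ^ (0 * p ^ n)) Q' := by
        linear_combination (norm := abel) this
      rw [h0] at heq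
      have hexp : p ^ (n + 1) = p * p ^ n := by ring
      rw [hexp]
      exact heq
    have hfixτk : ∀ k : ℕ, ρ ((γ ^ (p ^ (n + 1))) ^ k) Q' = Q' := by
      intro k
      induction k with
      | zero => simp
      | succ k ih =>
        rw [pow_succ, map_mul]
        show ρ ((γ ^ p ^ (n+1)) ^ k) (ρ (γ ^ p ^ (n+1)) Q') = Q'
        rw [hfixτ, ih]
    -- Q' fixed by all of Γn (n+1)
    refine ⟨Q', ?_, hQ'Minf, hpQ'⟩
    intro g hg
    obtain ⟨N, hN⟩ := hdisc Q'
    set N' := max N (n + 1) with hN'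
    obtain ⟨b, hb⟩ := (hmemΓ _ g).1 hg
    set a₀ := b.appr (N' - (n + 1)) with ha₀
    have hbspec := PadicInt.appr_spec (N' - (n + 1)) b
    obtain ⟨c, hc⟩ := Ideal.mem_span_singleton.1 hbspec
    -- g = γ ^ (p^(n+1) * a₀) * g₂
    have hgdec : g = γ ^ (p ^ (n + 1) * a₀)
        * Multiplicative.ofAdd ((p : ℤ_[p]) ^ (n + 1) * ((p : ℤ_[p]) ^ (N' - (n + 1)) * c)) := by
      have h1 : Multiplicative.toAdd (γ ^ (p ^ (n + 1) * a₀)) = ((p ^ (n + 1) * a₀ : ℕ) : ℤ_[p]) :=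
        htoAdd _
      apply Multiplicative.toAdd.injective
      rw [toAdd_mul, h1, toAdd_ofAdd, hb]
      push_cast
      rw [← hc]
      ring
    have hg₂ : Multiplicative.ofAdd ((p : ℤ_[p]) ^ (n + 1) * ((p : ℤ_[p]) ^ (N' - (n + 1)) * c))
        ∈ Γn N := by
      rw [hmemΓ, toAdd_ofAdd]
      have : (p : ℤ_[p]) ^ N ∣ (p : ℤ_[p]) ^ (n + 1) * (p : ℤ_[p]) ^ (N' - (n + 1)) := by
        rw [← pow_add]
        refine pow_dvd_pow _ ?_
        have h1 : n + 1 ≤ N' := le_max_right _ _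
        have h2 : N ≤ N' := le_max_left _ _
        omega
      simpa [mul_assoc] using this.mul_right c
    rw [hgdec, map_mul]
    show ρ (γ ^ (p ^ (n + 1) * a₀)) (ρ _ Q') = Q'
    rw [hN _ hg₂]
    rw [pow_mul]
    exact hfixτk a₀
  -- single norm step
  have hnormstep : ∀ n, n₀ ≤ n →
      invSub ρ (Γn n) ⊓ Minf ≤ AddSubgroup.map
        (∑ i ∈ Finset.range p, (ρ (γ ^ (i * p ^ n))).toAddMonoidHom)
        (invSub ρ (Γn (n + 1)) ⊓ Minf) := by
    intro n hn Q hQ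
    obtain ⟨hQinv, hQMinf⟩ := hQ
    obtain ⟨Q', hQ'inv, hQ'Minf, hpQ'⟩ := hlift n hn Q hQinv hQMinf
    have hhj : ∀ j : ℕ, γ ^ (j * p ^ n) ∈ Γn n := fun j => hmemγ n _ ⟨j, by ring⟩
    set w : M := ∑ j ∈ Finset.range p, (ρ (γ ^ (j * p ^ n)) Q' - Q') with hw
    have hwp : p • w = 0 := by
      rw [hw, Finset.smul_sum]
      refine Finset.sum_eq_zero fun j _ => ?_
      have : p • ρ (γ ^ (j * p ^ n)) Q' = ρ (γ ^ (j * p ^ n)) (p • Q') :=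
        (map_nsmul (ρ (γ ^ (j * p ^ n))) p Q').symm
      rw [smul_sub, this, hpQ', hQinv _ (hhj j), sub_self]
    have hwMinf : w ∈ Minf := by
      rw [hw]
      exact AddSubgroup.sum_mem Minf fun j _ => sub_mem (hstab _ _ hQ'Minf) hQ'Minf
    have hS : ∑ j ∈ Finset.range p, ρ (γ ^ (j * p ^ n)) Q' = w + Q := by
      rw [hw, Finset.sum_sub_distrib, Finset.sum_const, Finset.card_range, ← hpQ']
      abel
    obtain ⟨w', hw'Minf, hpw'⟩ := hdiv w hwMinf 1
    rw [pow_one] at hpw'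
    have hw'2 : p ^ 2 • w' = 0 := by
      rw [sq, mul_smul, hpw', hwp]
    have hw'inv : ∀ k, n₀ ≤ k → w' ∈ invSub ρ (Γn k) := fun k hk => hn₀ k hk w' hw'2
    have hNw' : ∑ j ∈ Finset.range p, ρ (γ ^ (j * p ^ n)) w' = w := by
      have : ∀ j ∈ Finset.range p, ρ (γ ^ (j * p ^ n)) w' = w' :=
        fun j _ => hw'inv n hn _ (hhj j)
      rw [Finset.sum_congr rfl this, Finset.sum_const, Finset.card_range, hpw']
    refine AddSubgroup.mem_map.2 ⟨Q' - w', AddSubgroup.mem_inf.2 ⟨?_, ?_⟩, ?_⟩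
    · exact sub_mem hQ'inv (hw'inv (n + 1) (by omega))
    · exact sub_mem hQ'Minf hw'Minf
    · rw [hsum]
      have : ∀ j ∈ Finset.range p, ρ (γ ^ (j * p ^ n)) (Q' - w')
          = ρ (γ ^ (j * p ^ n)) Q' - ρ (γ ^ (j * p ^ n)) w' := fun j _ => map_sub _ _ _
      rw [Finset.sum_congr rfl this, Finset.sum_sub_distrib, hS, hNw']
      abel
  -- composition of norms
  have hcomp : ∀ (n d : ℕ) (x : M),
      (∑ j ∈ Finset.range p, (ρ (γ ^ (j * p ^ n))).toAddMonoidHom)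
        ((∑ k ∈ Finset.range (p ^ d), (ρ (γ ^ (k * p ^ (n + 1)))).toAddMonoidHom) x)
      = (∑ i ∈ Finset.range (p ^ (d + 1)), (ρ (γ ^ (i * p ^ n))).toAddMonoidHom) x := by
    intro n d x
    have hL : (∑ j ∈ Finset.range p, (ρ (γ ^ (j * p ^ n))).toAddMonoidHom)
          ((∑ k ∈ Finset.range (p ^ d), (ρ (γ ^ (k * p ^ (n + 1)))).toAddMonoidHom) x)
        = ∑ j ∈ Finset.range p, ∑ k ∈ Finset.range (p ^ d),
            ρ (γ ^ ((j + p * k) * p ^ n)) x := by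
      rw [hsum]
      refine Finset.sum_congr rfl fun j _ => ?_
      rw [hsum, map_sum]
      refine Finset.sum_congr rfl fun k _ => ?_
      have hjj : γ ^ ((j + p * k) * p ^ n) = γ ^ (j * p ^ n) * γ ^ (k * p ^ (n + 1)) := by
        rw [← pow_add]; congr 1; ring
      rw [hjj, map_mul, Module.End.mul_apply]
    rw [hL, hsum]
    have hpd : p ^ (d + 1) = p * p ^ d := by ring
    rw [hpd]
    exact (sum_range_mul_reindex p (p ^ d) hp.out.pos (fun i => ρ (γ ^ (i * p ^ n)) x)).symm
  -- part 1 by induction on d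
  have part1 : ∀ d n, n₀ ≤ n →
      invSub ρ (Γn n) ⊓ Minf ≤ AddSubgroup.map
        (∑ i ∈ Finset.range (p ^ d), (ρ (γ ^ (i * p ^ n))).toAddMonoidHom)
        (invSub ρ (Γn (n + d)) ⊓ Minf) := by
    intro d
    induction d with
    | zero =>
      intro n hn Q hQ
      refine AddSubgroup.mem_map.2 ⟨Q, by simpa using hQ, ?_⟩
      rw [pow_zero, hsum]
      simp [hγ]
    | succ d ih =>
      intro n hn Q hQ
      obtain ⟨Q₁, hQ₁, hQ₁eq⟩ := hnormstep n hn hQ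
      obtain ⟨Q₂, hQ₂, hQ₂eq⟩ := ih (n + 1) (by omega) hQ₁
      refine AddSubgroup.mem_map.2 ⟨Q₂, ?_, ?_⟩
      · have : n + 1 + d = n + (d + 1) := by omega
        rwa [this] at hQ₂
      · rw [← hcomp n d Q₂, hQ₂eq, hQ₁eq]
  -- part 2 machinery
  intro m n hn hnm
  have hd : n + (m - n) = m := by omega
  have key : invSub ρ (Γn n) ⊓ Minf ≤ AddSubgroup.map
      (∑ i ∈ Finset.range (p ^ (m - n)), (ρ (γ ^ (i * p ^ n))).toAddMonoidHom)
      (invSub ρ (Γn m) ⊓ Minf) := by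
    have := part1 (m - n) n hn
    rwa [hd] at this
  refine ⟨key, ?_⟩
  set X := invSub ρ (Γn n) with hX
  set Nm := (∑ i ∈ Finset.range (p ^ (m - n)), (ρ (γ ^ (i * p ^ n))).toAddMonoidHom) with hNm
  set B := (AddSubgroup.map Nm (invSub ρ (Γn m))).addSubgroupOf X with hB
  set φ : X →+ M ⧸ Minf := (QuotientAddGroup.mk' Minf).comp X.subtype with hφ
  have hfin : Finite (X ⧸ φ.ker) :=
    Finite.of_injective _ (QuotientAddGroup.kerLift_injective φ)
  have hle : φ.ker ≤ B := by
    intro x hx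
    have hxMinf : (x : M) ∈ Minf := by
      have : φ x = 0 := hx
      rw [hφ] at this
      simpa [QuotientAddGroup.eq_zero_iff] using this
    have hxX : (x : M) ∈ invSub ρ (Γn n) := x.2
    obtain ⟨y, hy, hyeq⟩ := key ⟨hxX, hxMinf⟩
    exact AddSubgroup.mem_addSubgroupOf.2 (AddSubgroup.mem_map.2 ⟨y, hy.1, hyeq⟩)
  have hsurj : Function.Surjective
      (QuotientAddGroup.map φ.ker B (AddMonoidHom.id X) (fun x hx => hle hx)) := by
    intro q
    obtain ⟨x, rfl⟩ := QuotientAddGroup.mk_surjective q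
    exact ⟨QuotientAddGroup.mk x, rfl⟩
  calc Nat.card (X ⧸ B) ≤ Nat.card (X ⧸ φ.ker) :=
        Nat.card_le_card_of_surjective _ hsurj
    _ ≤ Nat.card (M ⧸ Minf) :=
        Nat.card_le_card_of_injective _ (QuotientAddGroup.kerLift_injective φ)
end
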